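/- Feasibility Condition for non-overlapping time slots: if there exists an insertion position i ∈ Θ(ã^{w_ℓ}, A) such that λ_{w_ℓ}(A +_i ã^{w_ℓ}) − χ_{w_ℓ}(A, ã^{w_ℓ}) ≥ 0, where χ_{w_ℓ} = χ⁻_{w_ℓ} + χ⁺_{w_ℓ} is the loss time (entrance plus exit time) of window w_ℓ, then the insertion of ã^{w_ℓ} into A is time-feasible for at least one insertion position. -/

import Mathlib

/-- The tour obtained from `a` by inserting the new customer `x` between
positions `i` and `i+1`. -/
def insertAt {Loc : Type} (a : ℕ → Loc) (x : Loc) (i : ℕ) : ℕ → Loc :=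
  fun j => if j ≤ i then a j else if j = i + 1 then x else a (j - 1)

/-- The free time `λ_{w_ℓ}` of window `w_ℓ = [swl, ewl]` on a tour `b` whose
first/last indices inside `w_ℓ` are `f` and `l`. -/
noncomputable def freeTime {Loc : Type} (swl ewl : ℝ) (s : Loc → ℝ)
    (t : Loc → Loc → ℝ) (b : ℕ → Loc) (f l : ℕ) : ℝ :=
  (ewl - swl) - ∑ j ∈ Finset.Ico f l, (s (b j) + t (b j) (b (j + 1)))

/-!
Write `c_j` for the service-plus-travel time of leg `j`. Inside the block of customers of `A`
whose window meets `w_ℓ`, non-overlap forces every window to be `w_ℓ` itself, so there the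
arrival recursions carry no waiting: `α` grows by exactly `c_j` per leg and `β` drops by exactly
`c_j`. Hence the earliest arrival of `ã` after position `i` exceeds the entrance bound
`χ⁻ + s_{w_ℓ}` by at most the legs of `A +_i ã` from the window entry up to `ã`, and its latest
arrival falls short of `e_{w_ℓ} − χ⁺` by at most the legs from `ã` to the window exit. As `ã`
itself lies in `w_ℓ`, these two leg sums make up the whole sum in `λ_{w_ℓ}(A +_i ã)`, so
`λ − χ ≥ 0` says exactly that the earliest arrival of `ã` does not exceed the latest one.
-/

open Finset

theorem le_add_sum_Ico_of_succ_le {M : Type*} [AddCommGroup M] [PartialOrder M]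
    [IsOrderedAddMonoid M] {u c : ℕ → M} {j k : ℕ} (hjk : j ≤ k)
    (h : ∀ m ∈ Ico j k, u (m + 1) ≤ u m + c m) : u k ≤ u j + ∑ m ∈ Ico j k, c m := by
  have : ∑ m ∈ Ico j k, (u (m + 1) - u m) ≤ ∑ m ∈ Ico j k, c m :=
    sum_le_sum fun m hm => sub_le_iff_le_add'.2 (h m hm)
  rw [sum_Ico_sub u hjk] at this
  exact sub_le_iff_le_add'.1 this

theorem finite_singleton_union_setOf_exists_Icc {α : Type*} (y : α) (g : ℕ → α) (P : ℕ → Prop)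
    (p q : ℕ) : ({y} ∪ {v | ∃ i, p ≤ i ∧ i ≤ q ∧ P i ∧ v = g i}).Finite := by
  refine (Set.finite_singleton y).union (((Set.finite_Icc p q).image g).subset ?_)
  rintro v ⟨i, hpi, hiq, -, rfl⟩
  exact ⟨i, ⟨hpi, hiq⟩, rfl⟩

theorem window_eq_of_overlap {R : Type*} [Preorder R] {a b c d : R}
    (h : (a = c ∧ b = d) ∨ b ≤ c ∨ d ≤ a) (hcb : c < b) (had : a < d) : a = c ∧ b = d := by
  rcases h with h | h | h
  · exact h
  · exact absurd h hcb.not_ge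
  · exact absurd h had.not_ge

section Tour

variable {Loc : Type} {n : ℕ} {a : ℕ → Loc} {x : Loc} {wS wE : Loc → ℝ} {swl ewl : ℝ}
  {s : Loc → ℝ} {t : Loc → Loc → ℝ} {α β : ℕ → ℝ}

def legTime (s : Loc → ℝ) (t : Loc → Loc → ℝ) (b : ℕ → Loc) (j : ℕ) : ℝ :=
  s (b j) + t (b j) (b (j + 1))

theorem freeTime_eq_sub_sum_legTime (b : ℕ → Loc) (f l : ℕ) :
    freeTime swl ewl s t b f l = (ewl - swl) - ∑ j ∈ Ico f l, legTime s t b j :=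
  rfl

theorem legTime_nonneg (hs : ∀ c, 0 ≤ s c) (ht : ∀ c d, 0 ≤ t c d) (b : ℕ → Loc) (j : ℕ) :
    0 ≤ legTime s t b j :=
  add_nonneg (hs _) (ht _ _)

theorem insertAt_of_le {i j : ℕ} (h : j ≤ i) : insertAt a x i j = a j :=
  if_pos h

theorem insertAt_succ_self (i : ℕ) : insertAt a x i (i + 1) = x := by
  simp [insertAt]

theorem insertAt_succ_of_lt {i j : ℕ} (h : i < j) : insertAt a x i (j + 1) = a j := by
  simp only [insertAt]
  rw [if_neg (by omega), if_neg (by omega), Nat.add_sub_cancel]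

theorem sum_legTime_insertAt_Ico_succ_self {f i : ℕ} (h : f ≤ i) :
    ∑ j ∈ Ico f (i + 1), legTime s t (insertAt a x i) j
      = ∑ j ∈ Ico f i, legTime s t a j + (s (a i) + t (a i) x) := by
  rw [sum_Ico_succ_top h]
  congr 1
  · refine sum_congr rfl fun j hj => ?_
    have hj := (mem_Ico.1 hj).2
    simp only [legTime, insertAt_of_le hj.le, insertAt_of_le (Nat.succ_le_of_lt hj)]
  · simp only [legTime, insertAt_of_le le_rfl, insertAt_succ_self]

theorem sum_legTime_insertAt_Ico_succ_succ {i l : ℕ} (h : i < l) :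
    ∑ j ∈ Ico (i + 1) (l + 1), legTime s t (insertAt a x i) j
      = s x + t x (a (i + 1)) + ∑ j ∈ Ico (i + 1) l, legTime s t a j := by
  rw [sum_eq_sum_Ico_succ_bot (by omega), ← sum_Ico_add' _ (i + 1) l 1]
  congr 1
  · simp only [legTime, insertAt_succ_self, insertAt_succ_of_lt (Nat.lt_succ_self i)]
  · refine sum_congr rfl fun j hj => ?_
    have hj := (mem_Ico.1 hj).1
    simp only [legTime, insertAt_succ_of_lt (by omega : i < j),
      insertAt_succ_of_lt (by omega : i < j + 1)]

theorem earliestArrival_strictMonoOn (hs : ∀ c, 0 < s c) (ht : ∀ c d, 0 ≤ t c d)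
    (hαrec : ∀ j, j + 1 ≤ n →
      α (j + 1) = max (wS (a (j + 1))) (α j + s (a j) + t (a j) (a (j + 1)))) :
    StrictMonoOn α (Set.Iic n) :=
  strictMonoOn_Iic_of_lt_succ fun m hm => by
    rw [Order.succ_eq_add_one, hαrec m hm]
    linarith [le_max_right (wS (a (m + 1))) (α m + s (a m) + t (a m) (a (m + 1))), hs (a m),
      ht (a m) (a (m + 1))]

theorem latestArrival_monotoneOn (hs : ∀ c, 0 ≤ s c) (ht : ∀ c d, 0 ≤ t c d)
    (hβrec : ∀ j, 1 ≤ j → j ≤ n →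
      β j = min (wE (a j)) (β (j + 1) - s (a j) - t (a j) (a (j + 1)))) :
    MonotoneOn β (Set.Icc 1 (n + 1)) :=
  monotoneOn_of_le_succ Set.ordConnected_Icc fun m _ hm hm' => by
    rw [Order.succ_eq_add_one] at hm' ⊢
    rw [hβrec m hm.1 (by have := hm'.2; omega)]
    linarith [min_le_right (wE (a m)) (β (m + 1) - s (a m) - t (a m) (a (m + 1))), hs (a m),
      ht (a m) (a (m + 1))]

theorem max_earliestArrival_insertAt_le_entrance (hs : ∀ c, 0 < s c) (ht : ∀ c d, 0 ≤ t c d)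
    (hα : StrictMonoOn α (Set.Iic n))
    (hαrec : ∀ j, j + 1 ≤ n →
      α (j + 1) = max (wS (a (j + 1))) (α j + s (a j) + t (a j) (a (j + 1))))
    (hnov : ∀ k, 1 ≤ k → k ≤ n →
      (wS (a k) = swl ∧ wE (a k) = ewl) ∨ wE (a k) ≤ swl ∨ ewl ≤ wS (a k))
    (hfeas : ∀ j, 1 ≤ j → j ≤ n → wS (a j) ≤ α j ∧ α j ≤ wE (a j)) {f θm θp i fi : ℕ}
    (hf : f ∈ {i | 1 ≤ i ∧ i ≤ n ∧ swl ≤ wS (a i) ∧ wE (a i) ≤ ewl})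
    (hθp : θp ∈ {i | i ≤ n ∧ α i + s (a i) ≤ ewl}) (hθmi : θm ≤ i) (hiθp : i ≤ θp)
    (hfi : fi ∈ lowerBounds {j | 1 ≤ j ∧ j ≤ n + 1 ∧
      swl ≤ wS (insertAt a x i j) ∧ wE (insertAt a x i j) ≤ ewl}) :
    max swl (α i + s (a i) + t (a i) x) ≤
      sSup ({α f} ∪ {v | ∃ i, θm ≤ i ∧ i ≤ θp ∧ i ≤ f ∧
        v = max swl (α i + s (a i) + t (a i) x)})
      + ∑ j ∈ Ico fi (i + 1), legTime s t (insertAt a x i) j := by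
  have hlegs := legTime_nonneg (fun c => (hs c).le) ht
  have hbdd := (finite_singleton_union_setOf_exists_Icc (α f)
    (fun i => max swl (α i + s (a i) + t (a i) x)) (· ≤ f) θm θp).bddAbove
  rcases le_or_gt i f with hif | hif
  · exact le_add_of_le_of_nonneg (le_csSup hbdd (Or.inr ⟨i, hθmi, hiθp, hif, rfl⟩))
      (sum_nonneg fun j _ => hlegs _ j)
  obtain ⟨hf1, hfn, hfS, hfE⟩ := hf
  have hin : i ≤ n := hiθp.trans hθp.1
  have hαf : swl ≤ α f := hfS.trans (hfeas f hf1 hfn).1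
  have hwS : ∀ k, f < k → k ≤ i → wS (a k) = swl := fun k hfk hki =>
    have hk := hfeas k (by omega) (by omega)
    have hαk : α k ≤ α θp :=
      hα.monotoneOn (show k ≤ n by omega) hθp.1 (hki.trans hiθp)
    (window_eq_of_overlap (hnov k (by omega) (by omega))
      (hαf.trans_lt ((hα (show f ≤ n by omega) (show k ≤ n by omega) hfk).trans_le hk.2))
      (by linarith [hθp.2, hs (a θp)])).1
  have hαi : α i ≤ α f + ∑ j ∈ Ico f i, legTime s t a j :=
    le_add_sum_Ico_of_succ_le hif.le fun m hm => by
      obtain ⟨hfm, hmi⟩ := mem_Ico.1 hm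
      have hαm : α f ≤ α m := hα.monotoneOn (show f ≤ n by omega) (show m ≤ n by omega) hfm
      rw [hαrec m (by omega), hwS (m + 1) (by omega) hmi, legTime]
      exact max_le (by linarith [hs (a m), ht (a m) (a (m + 1))]) (by linarith)
  have hfif : fi ≤ f := hfi ⟨hf1, by omega, by rwa [insertAt_of_le hif.le],
    by rwa [insertAt_of_le hif.le]⟩
  have hsum : ∑ j ∈ Ico f (i + 1), legTime s t (insertAt a x i) j
      ≤ ∑ j ∈ Ico fi (i + 1), legTime s t (insertAt a x i) j :=
    sum_le_sum_of_subset_of_nonneg (Ico_subset_Ico hfif le_rfl) fun j _ _ => hlegs _ j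
  rw [sum_legTime_insertAt_Ico_succ_self hif.le] at hsum
  have hsup := le_csSup hbdd (Or.inl rfl)
  have hsum_nonneg : 0 ≤ ∑ j ∈ Ico fi (i + 1), legTime s t (insertAt a x i) j :=
    sum_nonneg fun j _ => hlegs _ j
  exact max_le (by linarith) (by linarith)

theorem exit_le_min_latestArrival_insertAt (hs : ∀ c, 0 < s c) (ht : ∀ c d, 0 ≤ t c d)
    (hα : StrictMonoOn α (Set.Iic n)) (hβ : MonotoneOn β (Set.Icc 1 (n + 1)))
    (hβrec : ∀ j, 1 ≤ j → j ≤ n →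
      β j = min (wE (a j)) (β (j + 1) - s (a j) - t (a j) (a (j + 1))))
    (hnov : ∀ k, 1 ≤ k → k ≤ n →
      (wS (a k) = swl ∧ wE (a k) = ewl) ∨ wE (a k) ≤ swl ∨ ewl ≤ wS (a k))
    (hfeas : ∀ j, 1 ≤ j → j ≤ n → wS (a j) ≤ α j ∧ α j ≤ wE (a j)) {l θm θp i li : ℕ}
    (hl : l ∈ {i | 1 ≤ i ∧ i ≤ n ∧ swl ≤ wS (a i) ∧ wE (a i) ≤ ewl})
    (hθm : swl + s x ≤ β (θm + 1)) (hθmi : θm ≤ i) (hiθp : i ≤ θp)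
    (hli : li ∈ upperBounds {j | 1 ≤ j ∧ j ≤ n + 1 ∧
      swl ≤ wS (insertAt a x i j) ∧ wE (insertAt a x i j) ≤ ewl}) :
    sInf ({β l} ∪ {v | ∃ i, θm ≤ i ∧ i ≤ θp ∧ l ≤ i ∧
        v = min ewl (β (i + 1) - s x - t x (a (i + 1)))})
      - ∑ j ∈ Ico (i + 1) li, legTime s t (insertAt a x i) j
      ≤ min ewl (β (i + 1) - s x - t x (a (i + 1))) := by
  have hlegs := legTime_nonneg (fun c => (hs c).le) ht
  have hbdd := (finite_singleton_union_setOf_exists_Icc (β l)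
    (fun i => min ewl (β (i + 1) - s x - t x (a (i + 1)))) (l ≤ ·) θm θp).bddBelow
  rcases le_or_gt l i with hil | hil
  · exact (sub_le_self _ (sum_nonneg fun j _ => hlegs _ j)).trans
      (csInf_le hbdd (Or.inr ⟨i, hθmi, hiθp, hil, rfl⟩))
  obtain ⟨hl1, hln, hlS, hlE⟩ := hl
  have hβl : β l ≤ ewl := by
    rw [hβrec l hl1 hln]
    exact (min_le_left _ _).trans hlE
  have hwE : ∀ k, θm < k → k < l → wE (a k) = ewl := fun k hθk hkl =>
    have hβk : β (θm + 1) ≤ β k :=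
      hβ ⟨by omega, by omega⟩ ⟨by omega, by omega⟩ hθk
    have hβkE : β k ≤ wE (a k) := (hβrec k (by omega) (by omega)).le.trans (min_le_left _ _)
    (window_eq_of_overlap (hnov k (by omega) (by omega)) (by linarith [hs x])
      (((hfeas k (by omega) (by omega)).1.trans_lt
        (hα (show k ≤ n by omega) (show l ≤ n by omega) hkl)).trans_le
        ((hfeas l hl1 hln).2.trans hlE))).2
  have hβi : β l ≤ β (i + 1) + ∑ j ∈ Ico (i + 1) l, legTime s t a j :=
    le_add_sum_Ico_of_succ_le hil fun m hm => by
      obtain ⟨him, hml⟩ := mem_Ico.1 hm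
      have hβm : β (m + 1) ≤ β l := hβ ⟨by omega, by omega⟩ ⟨by omega, by omega⟩ hml
      rw [hβrec m (by omega) (by omega), hwE m (by omega) hml, legTime]
      have := le_min (by linarith [hs (a m), ht (a m) (a (m + 1))] :
        β (m + 1) - s (a m) - t (a m) (a (m + 1)) ≤ ewl) le_rfl
      linarith
  have hlli : l + 1 ≤ li := hli ⟨by omega, by omega, by rwa [insertAt_succ_of_lt hil],
    by rwa [insertAt_succ_of_lt hil]⟩
  have hsum : ∑ j ∈ Ico (i + 1) (l + 1), legTime s t (insertAt a x i) j
      ≤ ∑ j ∈ Ico (i + 1) li, legTime s t (insertAt a x i) j :=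
    sum_le_sum_of_subset_of_nonneg (Ico_subset_Ico le_rfl hlli) fun j _ _ => hlegs _ j
  rw [sum_legTime_insertAt_Ico_succ_succ hil] at hsum
  have hinf := csInf_le hbdd (Or.inl rfl)
  have hsum_nonneg : 0 ≤ ∑ j ∈ Ico (i + 1) li, legTime s t (insertAt a x i) j :=
    sum_nonneg fun j _ => hlegs _ j
  exact le_min (by linarith) (by linarith)

end Tour

theorem feasibility_condition_general
    {Loc : Type} (n : ℕ) (a : ℕ → Loc) (x : Loc)
    (wS wE : Loc → ℝ) (swl ewl : ℝ) (s : Loc → ℝ) (t : Loc → Loc → ℝ)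
    (α β : ℕ → ℝ) (θm θp f l : ℕ)
    (hs : ∀ c, 0 < s c) (ht : ∀ c d, 0 ≤ t c d)
    (hx : wS x = swl ∧ wE x = ewl)
    -- non-overlapping windows
    (hnov₂ : ∀ i, 1 ≤ i → i ≤ n →
      (wS (a i) = swl ∧ wE (a i) = ewl) ∨ wE (a i) ≤ swl ∨ ewl ≤ wS (a i))
    -- earliest/latest arrival times of A and time-feasibility of A
    (hαrec : ∀ j, j + 1 ≤ n →
      α (j + 1) = max (wS (a (j + 1))) (α j + s (a j) + t (a j) (a (j + 1))))
    (hβrec : ∀ j, 1 ≤ j → j ≤ n →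
      β j = min (wE (a j)) (β (j + 1) - s (a j) - t (a j) (a (j + 1))))
    (hfeas : ∀ j, 1 ≤ j → j ≤ n → wS (a j) ≤ α j ∧ α j ≤ wE (a j))
    -- f and l are the first/last indices of customers inside w_ℓ (nonempty block)
    (hf : IsLeast {i | 1 ≤ i ∧ i ≤ n ∧ swl ≤ wS (a i) ∧ wE (a i) ≤ ewl} f)
    (hl : IsGreatest {i | 1 ≤ i ∧ i ≤ n ∧ swl ≤ wS (a i) ∧ wE (a i) ≤ ewl} l)
    -- the candidate insertion positions Θ = [θm, θp]
    (hθm : IsLeast {i | i ≤ n ∧ swl + s x ≤ β (i + 1)} θm)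
    (hθp : IsGreatest {i | i ≤ n ∧ α i + s (a i) ≤ ewl} θp) :
    -- earliest/latest arrival times of ã when inserted after position i
    letI αx : ℕ → ℝ := fun i => max swl (α i + s (a i) + t (a i) x)
    letI βx : ℕ → ℝ := fun i => min ewl (β (i + 1) - s x - t x (a (i + 1)))
    -- entrance time χ⁻ and exit time χ⁺ of w_ℓ
    letI χm : ℝ :=
      sSup ({α f} ∪ {v | ∃ i, θm ≤ i ∧ i ≤ θp ∧ i ≤ f ∧ v = αx i}) - swl
    letI χp : ℝ :=
      ewl - sInf ({β l} ∪ {v | ∃ i, θm ≤ i ∧ i ≤ θp ∧ l ≤ i ∧ v = βx i})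
    -- if λ_{w_ℓ}(A +_i ã) − χ_{w_ℓ}(A, ã) ≥ 0 for some i ∈ Θ ...
    (∃ i fi li, θm ≤ i ∧ i ≤ θp ∧
      IsLeast {j | 1 ≤ j ∧ j ≤ n + 1 ∧
        swl ≤ wS (insertAt a x i j) ∧ wE (insertAt a x i j) ≤ ewl} fi ∧
      IsGreatest {j | 1 ≤ j ∧ j ≤ n + 1 ∧
        swl ≤ wS (insertAt a x i j) ∧ wE (insertAt a x i j) ≤ ewl} li ∧
      0 ≤ freeTime swl ewl s t (insertAt a x i) fi li - (χm + χp)) →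
    -- ... then some insertion position is time-feasible
    ∃ i, i ≤ n ∧
      max swl (α i + s (a i) + t (a i) x)
        ≤ min ewl (β (i + 1) - s x - t x (a (i + 1))) := by
  rintro ⟨i, fi, li, hθmi, hiθp, hfi, hli, hfree⟩
  have hα := earliestArrival_strictMonoOn hs ht hαrec
  have hβ := latestArrival_monotoneOn (fun c => (hs c).le) ht hβrec
  have hin : i ≤ n := hiθp.trans hθp.1.1
  have hentry := max_earliestArrival_insertAt_le_entrance hs ht hα hαrec hnov₂ hfeas hf.1
    hθp.1 hθmi hiθp hfi.2
  have hexit := exit_le_min_latestArrival_insertAt hs ht hα hβ hβrec hnov₂ hfeas hl.1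
    hθm.1.2 hθmi hiθp hli.2
  -- `ã` itself lies in `w_ℓ`, so the free-time sum splits at its position `i + 1`.
  have hx_mem : i + 1 ∈ {j | 1 ≤ j ∧ j ≤ n + 1 ∧
      swl ≤ wS (insertAt a x i j) ∧ wE (insertAt a x i j) ≤ ewl} :=
    ⟨by omega, by omega, by rw [insertAt_succ_self, hx.1], by rw [insertAt_succ_self, hx.2]⟩
  rw [freeTime_eq_sub_sum_legTime,
    ← sum_Ico_consecutive _ (hfi.2 hx_mem) (hli.2 hx_mem)] at hfree
  exact ⟨i, hin, by linarith⟩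

/-- Feasibility Condition (non-overlapping time slots): if for some insertion
position `i ∈ Θ = [Θ⁻, Θ⁺]` we have `λ_{w_ℓ}(A +_i ã) − χ_{w_ℓ}(A, ã) ≥ 0`,
where the loss time `χ_{w_ℓ} = χ⁻_{w_ℓ} + χ⁺_{w_ℓ}` is the sum of the entrance
time `χ⁻ = max(α_{a_f}, max_{i ∈ Θ, i ≤ f} α_{ã,i}) − s_{w_ℓ}` and the exit time
`χ⁺ = e_{w_ℓ} − min(β_{a_l}, min_{i ∈ Θ, i ≥ l} β_{ã,i})`, then the insertion of
`ã^{w_ℓ}` into `A` is time-feasible for at least one position. -/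
theorem feasibility_condition
    {Loc : Type} (n : ℕ) (a : ℕ → Loc) (x : Loc)
    (wS wE : Loc → ℝ) (swl ewl : ℝ) (s : Loc → ℝ) (t : Loc → Loc → ℝ)
    (start endT : ℝ) (α β : ℕ → ℝ) (θm θp f l : ℕ)
    (hs : ∀ c, 0 < s c) (ht : ∀ c d, 0 ≤ t c d)
    (hx : wS x = swl ∧ wE x = ewl) (hwl : swl < ewl)
    -- non-overlapping windows
    (hnov₁ : ∀ i j, 1 ≤ i → i ≤ n → 1 ≤ j → j ≤ n →
      (wS (a i) = wS (a j) ∧ wE (a i) = wE (a j)) ∨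
      wE (a i) ≤ wS (a j) ∨ wE (a j) ≤ wS (a i))
    (hnov₂ : ∀ i, 1 ≤ i → i ≤ n →
      (wS (a i) = swl ∧ wE (a i) = ewl) ∨ wE (a i) ≤ swl ∨ ewl ≤ wS (a i))
    -- earliest/latest arrival times of A and time-feasibility of A
    (hα0 : α 0 = start)
    (hαrec : ∀ j, j + 1 ≤ n →
      α (j + 1) = max (wS (a (j + 1))) (α j + s (a j) + t (a j) (a (j + 1))))
    (hαend : α (n + 1) = α n + s (a n) + t (a n) (a (n + 1)))
    (hβend : β (n + 1) = endT)
    (hβrec : ∀ j, 1 ≤ j → j ≤ n →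
      β j = min (wE (a j)) (β (j + 1) - s (a j) - t (a j) (a (j + 1))))
    (hβ0 : β 0 = β 1 - t (a 0) (a 1))
    (hfeas : ∀ j, 1 ≤ j → j ≤ n → wS (a j) ≤ α j ∧ α j ≤ wE (a j))
    (hret : α (n + 1) ≤ endT)
    -- f and l are the first/last indices of customers inside w_ℓ (nonempty block)
    (hf : IsLeast {i | 1 ≤ i ∧ i ≤ n ∧ swl ≤ wS (a i) ∧ wE (a i) ≤ ewl} f)
    (hl : IsGreatest {i | 1 ≤ i ∧ i ≤ n ∧ swl ≤ wS (a i) ∧ wE (a i) ≤ ewl} l)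
    -- the candidate insertion positions Θ = [θm, θp]
    (hθm : IsLeast {i | i ≤ n ∧ swl + s x ≤ β (i + 1)} θm)
    (hθp : IsGreatest {i | i ≤ n ∧ α i + s (a i) ≤ ewl} θp) :
    -- earliest/latest arrival times of ã when inserted after position i
    letI αx : ℕ → ℝ := fun i => max swl (α i + s (a i) + t (a i) x)
    letI βx : ℕ → ℝ := fun i => min ewl (β (i + 1) - s x - t x (a (i + 1)))
    -- entrance time χ⁻ and exit time χ⁺ of w_ℓ
    letI χm : ℝ :=
      sSup ({α f} ∪ {v | ∃ i, θm ≤ i ∧ i ≤ θp ∧ i ≤ f ∧ v = αx i}) - swl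
    letI χp : ℝ :=
      ewl - sInf ({β l} ∪ {v | ∃ i, θm ≤ i ∧ i ≤ θp ∧ l ≤ i ∧ v = βx i})
    -- if λ_{w_ℓ}(A +_i ã) − χ_{w_ℓ}(A, ã) ≥ 0 for some i ∈ Θ ...
    (∃ i fi li, θm ≤ i ∧ i ≤ θp ∧
      IsLeast {j | 1 ≤ j ∧ j ≤ n + 1 ∧
        swl ≤ wS (insertAt a x i j) ∧ wE (insertAt a x i j) ≤ ewl} fi ∧
      IsGreatest {j | 1 ≤ j ∧ j ≤ n + 1 ∧
        swl ≤ wS (insertAt a x i j) ∧ wE (insertAt a x i j) ≤ ewl} li ∧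
      0 ≤ freeTime swl ewl s t (insertAt a x i) fi li - (χm + χp)) →
    -- ... then some insertion position is time-feasible
    ∃ i, i ≤ n ∧
      max swl (α i + s (a i) + t (a i) x)
        ≤ min ewl (β (i + 1) - s x - t x (a (i + 1))) :=
  feasibility_condition_general n a x wS wE swl ewl s t α β θm θp f l hs ht hx hnov₂ hαrec hβrec
    hfeas hf hl hθm hθp
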